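/- arXiv:2409.00350 — 6 statements merged into one kernel-verified Lean document; each statement's English description precedes it below -/
import Mathlib

section
/- In an oriented graph, every source and every sink belongs to every monitoring arc-geodetic set. -/
namespace MAG

variable {V : Type*}

/-- Directed walk from `x` to `y` whose list of visited vertices is `l`. -/
inductive DWalk (A : V → V → Prop) : V → V → List V → Prop
  | nil (v : V) : DWalk A v v [v]
  | cons {u v w : V} {l : List V} (h : A u v) (p : DWalk A v w l) :
      DWalk A u w (u :: l)

/-- The arc `(a, b)` lies on the walk with vertex list `l`. -/
def ArcOn (a b : V) (l : List V) : Prop :=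
  ∃ l₁ l₂ : List V, l = l₁ ++ a :: b :: l₂

/-- `l` is (the vertex list of) a shortest directed walk from `x` to `y`. -/
def IsShortest (A : V → V → Prop) (x y : V) (l : List V) : Prop :=
  DWalk A x y l ∧ ∀ l' : List V, DWalk A x y l' → l.length ≤ l'.length

/-- `x` and `y` monitor the arc `(a, b)`: the arc lies on every shortest
directed path from `x` to `y` (and such a path exists), or symmetrically
from `y` to `x`. -/
def Monitors (A : V → V → Prop) (x y a b : V) : Prop :=
  ((∃ l, IsShortest A x y l) ∧ ∀ l, IsShortest A x y l → ArcOn a b l) ∨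
  ((∃ l, IsShortest A y x l) ∧ ∀ l, IsShortest A y x l → ArcOn a b l)

/-- A monitoring arc-geodetic set of the digraph `A`. -/
def IsMAGSet (A : V → V → Prop) (M : Set V) : Prop :=
  ∀ a b : V, A a b → ∃ x ∈ M, ∃ y ∈ M, x ≠ y ∧ Monitors A x y a b

/-- The monitoring arc-geodetic number of the digraph `A`. -/
noncomputable def mag (A : V → V → Prop) [Fintype V] : ℕ :=
  sInf {n | ∃ M : Finset V, IsMAGSet A (M : Set V) ∧ M.card = n}

/-- `A` is an orientation of the undirected simple graph `G`. -/
structure IsOrientation (G : SimpleGraph V) (A : V → V → Prop) : Prop where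
  adj_iff : ∀ u v : V, G.Adj u v ↔ (A u v ∨ A v u)
  asymm : ∀ u v : V, A u v → ¬ A v u

/-- The lower monitoring arc-geodetic number of `G`. -/
noncomputable def magMinus (G : SimpleGraph V) [Fintype V] : ℕ :=
  sInf {n | ∃ A : V → V → Prop, IsOrientation G A ∧ mag A = n}

/-- The upper monitoring arc-geodetic number of `G`. -/
noncomputable def magPlus (G : SimpleGraph V) [Fintype V] : ℕ :=
  sSup {n | ∃ A : V → V → Prop, IsOrientation G A ∧ mag A = n}

/-- A source: a vertex with no in-neighbours. -/
def IsSource (A : V → V → Prop) (v : V) : Prop := ∀ w, ¬ A w v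

/-- A sink: a vertex with no out-neighbours. -/
def IsSink (A : V → V → Prop) (v : V) : Prop := ∀ w, ¬ A v w

/-- An oriented graph: no loops and no pair of opposite arcs. -/
def IsOrientedGraph (A : V → V → Prop) : Prop :=
  (∀ v, ¬ A v v) ∧ ∀ u v : V, A u v → ¬ A v u

/-- The underlying undirected graph of `A` is connected. -/
def IsConnectedDigraph (A : V → V → Prop) : Prop :=
  ∀ x y : V, Relation.ReflTransGen (fun a b => A a b ∨ A b a) x y


/-!
If `u` is a source, connectivity gives an arc `u → c`. A shortest walk through that arc
cannot enter `u` from anywhere, so it starts at `u`; hence one of the two vertices of `M`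
monitoring the arc is `u`. Sinks are dual, with walks ending at `u`.
-/

section

variable {A : V → V → Prop} {s t a b x y : V} {l : List V}

theorem not_arcOn_singleton (v : V) : ¬ ArcOn a b [v] := by
  rintro ⟨l₁, l₂, hl⟩
  have := congrArg List.length hl
  simp only [List.length_append, List.length_cons, List.length_nil] at this
  omega

theorem ArcOn.of_cons {u : V} (h : ArcOn a b (u :: l)) :
    (u = a ∧ ∃ l₂, l = b :: l₂) ∨ ArcOn a b l := by
  obtain ⟨_ | ⟨c, l₁⟩, l₂, hl⟩ := h
  · simp only [List.nil_append, List.cons.injEq] at hl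
    exact .inl ⟨hl.1, l₂, hl.2⟩
  · simp only [List.cons_append, List.cons.injEq] at hl
    exact .inr ⟨l₁, l₂, hl.2⟩

theorem DWalk.start_eq_of_arcOn_of_isSource (h : DWalk A s t l) (hab : ArcOn a b l)
    (ha : IsSource A a) : s = a := by
  induction h with
  | nil v => exact absurd hab (not_arcOn_singleton v)
  | cons hu _ ih =>
    rcases hab.of_cons with ⟨rfl, -⟩ | hab
    · rfl
    · exact absurd (ih hab ▸ hu) (ha _)

theorem DWalk.end_eq_of_arcOn_of_isSink (h : DWalk A s t l) (hab : ArcOn a b l)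
    (hb : IsSink A b) : t = b := by
  induction h with
  | nil v => exact absurd hab (not_arcOn_singleton v)
  | cons _ p ih =>
    rcases hab.of_cons with ⟨rfl, l₂, rfl⟩ | hab
    · cases p with
      | nil => rfl
      | cons hb' _ => exact absurd hb' (hb _)
    · exact ih hab

theorem Monitors.eq_or_eq_of_isSource (h : Monitors A x y a b) (ha : IsSource A a) :
    x = a ∨ y = a := by
  rcases h with ⟨⟨l, hl⟩, hall⟩ | ⟨⟨l, hl⟩, hall⟩
  · exact .inl (hl.1.start_eq_of_arcOn_of_isSource (hall l hl) ha)
  · exact .inr (hl.1.start_eq_of_arcOn_of_isSource (hall l hl) ha)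

theorem Monitors.eq_or_eq_of_isSink (h : Monitors A x y a b) (hb : IsSink A b) :
    y = b ∨ x = b := by
  rcases h with ⟨⟨l, hl⟩, hall⟩ | ⟨⟨l, hl⟩, hall⟩
  · exact .inl (hl.1.end_eq_of_arcOn_of_isSink (hall l hl) hb)
  · exact .inr (hl.1.end_eq_of_arcOn_of_isSink (hall l hl) hb)

theorem IsMAGSet.mem_of_isSource {M : Set V} (hM : IsMAGSet A M) (hab : A a b)
    (ha : IsSource A a) : a ∈ M := by
  obtain ⟨x, hx, y, hy, -, hmon⟩ := hM a b hab
  rcases hmon.eq_or_eq_of_isSource ha with rfl | rfl <;> assumption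

theorem IsMAGSet.mem_of_isSink {M : Set V} (hM : IsMAGSet A M) (hab : A a b)
    (hb : IsSink A b) : b ∈ M := by
  obtain ⟨x, hx, y, hy, -, hmon⟩ := hM a b hab
  rcases hmon.eq_or_eq_of_isSink hb with rfl | rfl <;> assumption

theorem IsConnectedDigraph.exists_adj [Nontrivial V] (h : IsConnectedDigraph A) (u : V) :
    ∃ c, A u c ∨ A c u := by
  obtain ⟨v, hv⟩ := exists_ne u
  rcases (h u v).cases_head with huv | ⟨c, huc, -⟩
  · exact absurd huv.symm hv
  · exact ⟨c, huc⟩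

end

theorem source_or_sink_mem_MAGSet_general {V : Type*} [Nontrivial V] (A : V → V → Prop)
    (hconn : IsConnectedDigraph A)
    (u : V) (hu : IsSource A u ∨ IsSink A u)
    (M : Set V) (hM : IsMAGSet A M) : u ∈ M := by
  obtain ⟨c, hc⟩ := hconn.exists_adj u
  rcases hu with hsrc | hsink
  · exact hM.mem_of_isSource (hc.resolve_right (hsrc c)) hsrc
  · exact hM.mem_of_isSink (hc.resolve_left (hsink c)) hsink

/-- In a (connected, nontrivial) oriented graph, every source and
every sink belongs to every monitoring arc-geodetic set. -/
theorem source_or_sink_mem_MAGSet {V : Type*} [Nontrivial V] (A : V → V → Prop)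
    (hor : IsOrientedGraph A) (hconn : IsConnectedDigraph A)
    (u : V) (hu : IsSource A u ∨ IsSink A u)
    (M : Set V) (hM : IsMAGSet A M) : u ∈ M :=
  source_or_sink_mem_MAGSet_general A hconn u hu M hM

end MAG
end

section
/- Every connected bipartite graph G with at least one edge admits an orientation whose unique minimum monitoring arc-geodetic set is the entire vertex set; in particular, the upper monitoring arc-geodetic number of G equals |V(G)|. -/
namespace MAG

variable {V : Type*}

/-! Orient every edge of `G` from colour class `0` to colour class `1` of a proper 2-colouring.
Then every vertex is a source or a sink, so a directed path between distinct vertices is a single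
arc, and the only pair monitoring an arc is its own pair of endpoints. Since `G` is connected and
has an edge, no vertex is isolated, so every vertex belongs to every monitoring arc-geodetic set. -/

section Walks

variable {A : V → V → Prop} {a b x y : V} {l : List V}

lemma DWalk.two_le_length (hxy : x ≠ y) (p : DWalk A x y l) : 2 ≤ l.length := by
  cases p with
  | nil => exact absurd rfl hxy
  | cons _ p => cases p <;> simp

lemma DWalk.eq_pair_of_length_le_two (hxy : x ≠ y) (p : DWalk A x y l) (hl : l.length ≤ 2) :
    l = [x, y] := by
  cases p with
  | nil => exact absurd rfl hxy
  | cons _ p =>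
    cases p with
    | nil => rfl
    | cons _ p => cases p <;> simp at hl

lemma isShortest_pair (hab : a ≠ b) (h : A a b) : IsShortest A a b [a, b] :=
  ⟨.cons h (.nil b), fun _ p => p.two_le_length hab⟩

lemma monitors_of_adj (hab : a ≠ b) (h : A a b) : Monitors A a b a b :=
  .inl ⟨⟨_, isShortest_pair hab h⟩, fun l hl => by
    rw [hl.1.eq_pair_of_length_le_two hab (hl.2 _ (isShortest_pair hab h).1)]
    exact ⟨[], [], rfl⟩⟩

lemma ArcOn.two_le_length (h : ArcOn a b l) : 2 ≤ l.length := by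
  obtain ⟨l₁, l₂, rfl⟩ := h
  simp only [List.length_append, List.length_cons]
  omega

lemma arcOn_pair_iff : ArcOn a b [x, y] ↔ a = x ∧ b = y := by
  constructor
  · rintro ⟨_ | ⟨_, _ | ⟨_, _⟩⟩, l₂, h⟩ <;> simp_all
  · rintro ⟨rfl, rfl⟩
    exact ⟨[], [], rfl⟩

lemma IsShortest.not_arcOn_of_eq (hl : IsShortest A x x l) : ¬ ArcOn a b l := fun h => by
  have hle : l.length ≤ 1 := hl.2 _ (.nil x)
  have := h.two_le_length
  omega

end Walks

section SourcesAndSinks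

variable {A : V → V → Prop} {a b x y : V} {l : List V}

lemma DWalk.eq_pair_of_isSource_or_isSink (hA : ∀ v, IsSource A v ∨ IsSink A v) (hxy : x ≠ y)
    (p : DWalk A x y l) : l = [x, y] := by
  cases p with
  | nil => exact absurd rfl hxy
  | @cons _ v _ _ huv p =>
    cases p with
    | nil => rfl
    | cons hvw _ => exact ((hA v).elim (· _ huv) (· _ hvw)).elim

lemma IsShortest.eq_of_arcOn (hA : ∀ v, IsSource A v ∨ IsSink A v) (hl : IsShortest A x y l)
    (h : ArcOn a b l) : x = a ∧ y = b := by
  by_cases hxy : x = y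
  · subst hxy
    exact absurd h hl.not_arcOn_of_eq
  · rw [hl.1.eq_pair_of_isSource_or_isSink hA hxy, arcOn_pair_iff] at h
    exact ⟨h.1.symm, h.2.symm⟩

lemma Monitors.eq_or_eq (hA : ∀ v, IsSource A v ∨ IsSink A v) (h : Monitors A x y a b) :
    (x = a ∧ y = b) ∨ (y = a ∧ x = b) := by
  rcases h with ⟨⟨l, hl⟩, hall⟩ | ⟨⟨l, hl⟩, hall⟩
  · exact .inl (hl.eq_of_arcOn hA (hall l hl))
  · exact .inr (hl.eq_of_arcOn hA (hall l hl))

lemma IsMAGSet.mem_of_arc (hA : ∀ v, IsSource A v ∨ IsSink A v) {M : Set V} (hM : IsMAGSet A M)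
    (h : A a b) : a ∈ M ∧ b ∈ M := by
  obtain ⟨x, hx, y, hy, -, hmon⟩ := hM a b h
  rcases hmon.eq_or_eq hA with ⟨rfl, rfl⟩ | ⟨rfl, rfl⟩
  exacts [⟨hx, hy⟩, ⟨hy, hx⟩]

lemma IsMAGSet.eq_univ (hA : ∀ v, IsSource A v ∨ IsSink A v) {M : Set V} (hM : IsMAGSet A M)
    (hcov : ∀ v, ∃ w, A v w ∨ A w v) : M = Set.univ :=
  Set.eq_univ_of_forall fun v => by
    obtain ⟨w, hvw | hwv⟩ := hcov v
    exacts [(hM.mem_of_arc hA hvw).1, (hM.mem_of_arc hA hwv).2]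

end SourcesAndSinks

section MonitoringNumbers

variable {A : V → V → Prop}

lemma IsOrientation.irrefl {G : SimpleGraph V} (hA : IsOrientation G A) (v : V) : ¬ A v v :=
  fun h => hA.asymm v v h h

lemma isMAGSet_univ (hirr : ∀ v, ¬ A v v) : IsMAGSet A Set.univ := fun a b h =>
  have hab : a ≠ b := fun he => hirr a (he ▸ h)
  ⟨a, trivial, b, trivial, hab, monitors_of_adj hab h⟩

variable [Fintype V]

lemma mag_le_card (hirr : ∀ v, ¬ A v v) : mag A ≤ Fintype.card V :=
  Nat.sInf_le ⟨Finset.univ, by simpa using isMAGSet_univ hirr, Finset.card_univ⟩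

lemma mag_eq_card (hirr : ∀ v, ¬ A v v) (huniv : ∀ M : Set V, IsMAGSet A M → M = Set.univ) :
    mag A = Fintype.card V := by
  refine (mag_le_card hirr).antisymm <|
    le_csInf ⟨_, Finset.univ, by simpa using isMAGSet_univ hirr, rfl⟩ ?_
  rintro _ ⟨M, hM, rfl⟩
  have : M = Finset.univ := Finset.coe_injective (by simpa using huniv _ hM)
  rw [this, Finset.card_univ]

lemma magPlus_eq_card_of_isOrientation {G : SimpleGraph V} (hA : IsOrientation G A)
    (hmag : mag A = Fintype.card V) : magPlus G = Fintype.card V := by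
  have hbdd : ∀ n ∈ {n | ∃ A, IsOrientation G A ∧ mag A = n}, n ≤ Fintype.card V := by
    rintro _ ⟨A', hA', rfl⟩
    exact mag_le_card hA'.irrefl
  exact le_antisymm (csSup_le ⟨_, A, hA, hmag⟩ hbdd) (le_csSup ⟨_, hbdd⟩ ⟨A, hA, hmag⟩)

end MonitoringNumbers

section Bipartite

variable {G : SimpleGraph V}

def bipartiteOrientation (c : G.Coloring (Fin 2)) (u v : V) : Prop :=
  G.Adj u v ∧ c u = 0 ∧ c v = 1

lemma isOrientation_bipartiteOrientation (c : G.Coloring (Fin 2)) :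
    IsOrientation G (bipartiteOrientation c) where
  adj_iff u v := by
    refine ⟨fun huv => ?_, by rintro (⟨h, -⟩ | ⟨h, -⟩) <;> [exact h; exact h.symm]⟩
    have hne := c.valid huv
    rcases (by omega : (c u = 0 ∧ c v = 1) ∨ (c v = 0 ∧ c u = 1)) with h | h
    exacts [.inl ⟨huv, h⟩, .inr ⟨huv.symm, h⟩]
  asymm u v := by
    rintro ⟨-, hu, -⟩ ⟨-, -, hu'⟩
    omega

lemma isSource_or_isSink_bipartiteOrientation (c : G.Coloring (Fin 2)) (v : V) :
    IsSource (bipartiteOrientation c) v ∨ IsSink (bipartiteOrientation c) v := by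
  rcases (by omega : c v = 0 ∨ c v = 1) with h | h
  · exact .inl fun _ ⟨_, _, hv⟩ => by omega
  · exact .inr fun _ ⟨_, hv, _⟩ => by omega

end Bipartite

/-- every connected bipartite graph with an edge admits an
orientation whose unique minimum MAG-set is the whole vertex set, and
consequently `mag⁺(G) = |V(G)|`. -/
theorem bipartite_magPlus_eq_card {V : Type*} [Fintype V] (G : SimpleGraph V)
    (hconn : G.Connected) (hedge : ∃ u v : V, G.Adj u v)
    (hbip : G.Colorable 2) :
    (∃ A : V → V → Prop, IsOrientation G A ∧
      (∀ M : Set V, IsMAGSet A M → M = Set.univ)) ∧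
    magPlus G = Fintype.card V := by
  obtain ⟨c⟩ := hbip
  have hA := isOrientation_bipartiteOrientation c
  obtain ⟨_, _, huw⟩ := hedge
  have := huw.nontrivial
  have hcov (v : V) : ∃ w, bipartiteOrientation c v w ∨ bipartiteOrientation c w v := by
    obtain ⟨w, hvw⟩ := hconn.preconnected.exists_adj_of_nontrivial v
    exact ⟨w, (hA.adj_iff v w).1 hvw⟩
  have huniv (M : Set V) (hM : IsMAGSet (bipartiteOrientation c) M) : M = Set.univ :=
    hM.eq_univ (isSource_or_isSink_bipartiteOrientation c) hcov
  exact ⟨⟨_, hA, huniv⟩, magPlus_eq_card_of_isOrientation hA (mag_eq_card hA.irrefl huniv)⟩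

end MAG
end

section
/- In any oriented graph, if two distinct vertices u and v are twins (i.e., they have the same in-neighborhood and the same out-neighborhood), then both u and v belong to every monitoring arc-geodetic set. -/
namespace MAG

variable {V : Type*}

/-! If `u` and `v` are twins, collapsing `u` onto `v` is an endomorphism of the digraph that
fixes every other vertex. It sends a shortest walk between two vertices different from `u` to
a walk of the same length, hence again a shortest one, which misses `u`. So no pair of vertices
different from `u` monitors an arc at `u`; since `u` has an incident arc, `u` lies in every
monitoring arc-geodetic set. -/

section

variable {A : V → V → Prop}

theorem DWalk.map {f : V → V} (hf : ∀ a b, A a b → A (f a) (f b)) {x y : V} {l : List V}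
    (p : DWalk A x y l) : DWalk A (f x) (f y) (l.map f) := by
  induction p with
  | nil v => exact DWalk.nil (f v)
  | cons h _ ih => exact DWalk.cons (hf _ _ h) ih

theorem ArcOn.mem_left {a b : V} {l : List V} (h : ArcOn a b l) : a ∈ l := by
  obtain ⟨l₁, l₂, rfl⟩ := h
  simp

theorem ArcOn.mem_right {a b : V} {l : List V} (h : ArcOn a b l) : b ∈ l := by
  obtain ⟨l₁, l₂, rfl⟩ := h
  simp

theorem IsShortest.map {f : V → V} (hf : ∀ a b, A a b → A (f a) (f b)) {x y : V}
    (hx : f x = x) (hy : f y = y) {l : List V} (hl : IsShortest A x y l) :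
    IsShortest A x y (l.map f) := by
  refine ⟨hx ▸ hy ▸ hl.1.map hf, fun l' hl' => ?_⟩
  simpa using hl.2 l' hl'

theorem mem_range_of_forall_isShortest_arcOn {f : V → V} (hf : ∀ a b, A a b → A (f a) (f b))
    {x y a b : V} (hx : f x = x) (hy : f y = y) (hex : ∃ l, IsShortest A x y l)
    (harc : ∀ l, IsShortest A x y l → ArcOn a b l) : a ∈ Set.range f ∧ b ∈ Set.range f := by
  obtain ⟨l, hl⟩ := hex
  have himage := harc _ (hl.map hf hx hy)
  obtain ⟨a', -, ha'⟩ := List.mem_map.mp himage.mem_left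
  obtain ⟨b', -, hb'⟩ := List.mem_map.mp himage.mem_right
  exact ⟨⟨a', ha'⟩, ⟨b', hb'⟩⟩

theorem Monitors.mem_range {f : V → V} (hf : ∀ a b, A a b → A (f a) (f b)) {x y a b : V}
    (hx : f x = x) (hy : f y = y) (h : Monitors A x y a b) :
    a ∈ Set.range f ∧ b ∈ Set.range f := by
  rcases h with ⟨hex, harc⟩ | ⟨hex, harc⟩
  · exact mem_range_of_forall_isShortest_arcOn hf hx hy hex harc
  · exact mem_range_of_forall_isShortest_arcOn hf hy hx hex harc

theorem IsMAGSet.mem_range {M : Set V} (hM : IsMAGSet A M) {f : V → V}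
    (hf : ∀ a b, A a b → A (f a) (f b)) (hfix : ∀ z ∈ M, f z = z) {a b : V} (hab : A a b) :
    a ∈ Set.range f ∧ b ∈ Set.range f := by
  obtain ⟨x, hx, y, hy, -, hmon⟩ := hM a b hab
  exact hmon.mem_range hf (hfix x hx) (hfix y hy)

theorem map_update_id_of_twins [DecidableEq V] {u v : V} (hloop : ¬ A u u)
    (hout : ∀ w, A u w ↔ A v w) (hin : ∀ w, A w u ↔ A w v) :
    ∀ a b, A a b → A (Function.update id u v a) (Function.update id u v b) := by
  intro a b hab
  rcases eq_or_ne u a with rfl | ha <;> rcases eq_or_ne u b with rfl | hb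
  · exact absurd hab hloop
  · simpa [hb.symm] using (hout b).mp hab
  · simpa [ha.symm] using (hin a).mp hab
  · simpa [ha.symm, hb.symm] using hab

theorem notMem_range_update_id [DecidableEq V] {u v : V} (huv : u ≠ v) :
    u ∉ Set.range (Function.update id u v) := by
  rintro ⟨z, hz⟩
  rcases eq_or_ne z u with rfl | hzu
  · rw [Function.update_self] at hz
    exact huv hz.symm
  · rw [Function.update_of_ne hzu, id] at hz
    exact hzu hz

theorem IsMAGSet.mem_of_twins {M : Set V} (hM : IsMAGSet A M) {u v : V} (huv : u ≠ v)
    (hloop : ¬ A u u) (hout : ∀ w, A u w ↔ A v w) (hin : ∀ w, A w u ↔ A w v)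
    (hadj : ∃ w, A u w ∨ A w u) : u ∈ M := by
  classical
  by_contra huM
  have hfix : ∀ z ∈ M, Function.update id u v z = z := fun z hz =>
    Function.update_of_ne (ne_of_mem_of_not_mem hz huM) v id
  have hrange := fun {a b : V} (hab : A a b) =>
    hM.mem_range (map_update_id_of_twins hloop hout hin) hfix hab
  obtain ⟨w, huw | hwu⟩ := hadj
  · exact notMem_range_update_id huv (hrange huw).1
  · exact notMem_range_update_id huv (hrange hwu).2

theorem IsConnectedDigraph.exists_adj_s2 (hA : IsConnectedDigraph A) {x y : V} (hxy : x ≠ y) :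
    ∃ w, A x w ∨ A w x := by
  rcases (hA x y).cases_head with rfl | ⟨w, hxw, -⟩
  · exact absurd rfl hxy
  · exact ⟨w, hxw⟩

end

theorem twins_mem_MAGSet_general {V : Type*} (A : V → V → Prop)
    (hor : IsOrientedGraph A) (hconn : IsConnectedDigraph A)
    (u v : V) (huv : u ≠ v)
    (hout : ∀ w, A u w ↔ A v w) (hin : ∀ w, A w u ↔ A w v)
    (M : Set V) (hM : IsMAGSet A M) : u ∈ M ∧ v ∈ M :=
  ⟨hM.mem_of_twins huv (hor.1 u) hout hin (hconn.exists_adj_s2 huv),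
    hM.mem_of_twins huv.symm (hor.1 v) (fun w => (hout w).symm) (fun w => (hin w).symm)
      (hconn.exists_adj_s2 huv.symm)⟩

/-- in a (connected, nontrivial) oriented graph, every pair of
twins belongs to every MAG-set. -/
theorem twins_mem_MAGSet {V : Type*} [Nontrivial V] (A : V → V → Prop)
    (hor : IsOrientedGraph A) (hconn : IsConnectedDigraph A)
    (u v : V) (huv : u ≠ v)
    (hout : ∀ w, A u w ↔ A v w) (hin : ∀ w, A w u ↔ A w v)
    (M : Set V) (hM : IsMAGSet A M) : u ∈ M ∧ v ∈ M :=
  twins_mem_MAGSet_general A hor hconn u v huv hout hin M hM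

end MAG
end

section
/- For the directed cycle on n ≥ 3 vertices (all arcs oriented consistently around the cycle), any pair of distinct vertices forms a monitoring arc-geodetic set; hence its monitoring arc-geodetic number equals 2. -/
namespace MAG

variable {V : Type*}

/-! The walks of the directed cycle starting at `x` are exactly `x, x + 1, …, x + k`, so the unique
shortest path from `x` to `y` is `x, x + 1, …, y`, of length `(y - x).val`. The shortest paths from
`x` to `y` and from `y` to `x` together go once around the cycle, so one of them contains any
given arc `(a, a + 1)`. -/

theorem two_le_card_of_isMAGSet {A : V → V → Prop} {a b : V} (hab : A a b) {M : Finset V}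
    (hM : IsMAGSet A (M : Set V)) : 2 ≤ M.card := by
  obtain ⟨x, hx, y, hy, hxy, -⟩ := hM a b hab
  exact Finset.one_lt_card.2 ⟨x, hx, y, hy, hxy⟩

theorem mag_eq_two_of_isMAGSet_pair [Fintype V] {A : V → V → Prop} {a b x y : V} (hab : A a b)
    (hxy : x ≠ y) (hM : IsMAGSet A {x, y}) : mag A = 2 := by
  classical
  have hpair : 2 ∈ {m | ∃ M : Finset V, IsMAGSet A (M : Set V) ∧ M.card = m} :=
    ⟨{x, y}, by rwa [Finset.coe_pair], Finset.card_pair hxy⟩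
  refine le_antisymm (Nat.sInf_le hpair) (le_csInf ⟨2, hpair⟩ ?_)
  rintro m ⟨M, hM, rfl⟩
  exact two_le_card_of_isMAGSet hab hM

section SuccessorWalks

variable {R : Type*} [AddCommMonoidWithOne R]

def succPath (x : R) : ℕ → List R
  | 0 => [x]
  | k + 1 => x :: succPath (x + 1) k

@[simp]
theorem length_succPath (x : R) (k : ℕ) : (succPath x k).length = k + 1 := by
  induction k generalizing x <;> simp [succPath, *]

theorem succPath_eq_cons_tail (x : R) (k : ℕ) : succPath x k = x :: (succPath x k).tail := by
  cases k <;> rfl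

theorem dWalk_succ_iff {x y : R} {l : List R} :
    DWalk (fun i j : R => j = i + 1) x y l ↔ ∃ k : ℕ, y = x + k ∧ l = succPath x k := by
  constructor
  · intro h
    induction h with
    | nil v => exact ⟨0, by simp, rfl⟩
    | cons h _ ih =>
      obtain ⟨k, rfl, rfl⟩ := ih
      subst h
      exact ⟨k + 1, by push_cast; abel, rfl⟩
  · rintro ⟨k, rfl, rfl⟩
    induction k generalizing x with
    | zero => simpa [succPath] using DWalk.nil x
    | succ k ih =>
      have hend : x + ((k + 1 : ℕ) : R) = x + 1 + k := by push_cast; abel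
      rw [hend]
      exact DWalk.cons rfl ih

theorem arcOn_succPath {x : R} {i k : ℕ} (hik : i < k) :
    ArcOn (x + i) (x + i + 1) (succPath x k) := by
  induction i generalizing x k with
  | zero =>
    obtain ⟨k, rfl⟩ : ∃ k', k = k' + 1 := ⟨k - 1, by omega⟩
    refine ⟨[], (succPath (x + 1) k).tail, ?_⟩
    simp only [succPath, Nat.cast_zero, add_zero, List.nil_append]
    rw [← succPath_eq_cons_tail]
  | succ i ih =>
    obtain ⟨k, rfl⟩ : ∃ k', k = k' + 1 := ⟨k - 1, by omega⟩
    obtain ⟨l₁, l₂, h⟩ := ih (x := x + 1) (k := k) (by omega)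
    refine ⟨x :: l₁, l₂, ?_⟩
    have hstart : x + ((i + 1 : ℕ) : R) = x + 1 + i := by push_cast; abel
    rw [hstart, succPath, h, List.cons_append]

end SuccessorWalks

section DirectedCycle

variable {n : ℕ} [NeZero n]

theorem isShortest_cycle_iff {x y : ZMod n} {l : List (ZMod n)} :
    IsShortest (fun i j : ZMod n => j = i + 1) x y l ↔ l = succPath x (y - x).val := by
  have hy : y = x + (y - x).val := by rw [ZMod.natCast_zmod_val]; abel
  have hmin : ∀ k : ℕ, y = x + k → (y - x).val ≤ k := by
    rintro k rfl
    rw [add_sub_cancel_left, ZMod.val_natCast]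
    exact Nat.mod_le k n
  constructor
  · rintro ⟨hw, hshort⟩
    obtain ⟨k, hk, rfl⟩ := dWalk_succ_iff.1 hw
    have hle := hshort _ (dWalk_succ_iff.2 ⟨_, hy, rfl⟩)
    simp only [length_succPath, add_le_add_iff_right] at hle
    rw [le_antisymm hle (hmin k hk)]
  · rintro rfl
    refine ⟨dWalk_succ_iff.2 ⟨_, hy, rfl⟩, fun l hl => ?_⟩
    obtain ⟨k, hk, rfl⟩ := dWalk_succ_iff.1 hl
    simpa using hmin k hk

theorem monitors_cycle_of_val_lt {x y a : ZMod n} (h : (a - x).val < (y - x).val) :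
    (∃ l, IsShortest (fun i j : ZMod n => j = i + 1) x y l) ∧
      ∀ l, IsShortest (fun i j : ZMod n => j = i + 1) x y l → ArcOn a (a + 1) l := by
  refine ⟨⟨_, isShortest_cycle_iff.2 rfl⟩, fun l hl => ?_⟩
  have ha : a = x + (a - x).val := by rw [ZMod.natCast_zmod_val]; abel
  rw [isShortest_cycle_iff.1 hl, ha]
  exact arcOn_succPath h

theorem val_sub_lt_or_val_sub_lt {x y : ZMod n} (hxy : x ≠ y) (a : ZMod n) :
    (a - x).val < (y - x).val ∨ (a - y).val < (x - y).val := by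
  refine (lt_or_ge _ _).imp_right fun hge => ?_
  have hne : y - x ≠ 0 := sub_ne_zero.2 hxy.symm
  have hlt := ZMod.val_lt (a - x)
  rw [← sub_sub_sub_cancel_right a y x, ZMod.val_sub hge, ← neg_sub y x, ZMod.neg_val,
    if_neg hne]
  omega

theorem isMAGSet_cycle_pair {x y : ZMod n} (hxy : x ≠ y) :
    IsMAGSet (fun i j : ZMod n => j = i + 1) {x, y} := by
  rintro a _ rfl
  refine ⟨x, Set.mem_insert _ _, y, Set.mem_insert_of_mem _ rfl, hxy, ?_⟩
  exact (val_sub_lt_or_val_sub_lt hxy a).imp monitors_cycle_of_val_lt monitors_cycle_of_val_lt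

end DirectedCycle

/-- in the consistently directed cycle on `n ≥ 3` vertices, any
two distinct vertices form a MAG-set, and the monitoring arc-geodetic number
is `2`. -/
theorem directedCycle_mag_eq_two (n : ℕ) [NeZero n] (hn : 3 ≤ n) :
    (∀ x y : ZMod n, x ≠ y →
      IsMAGSet (fun i j : ZMod n => j = i + 1) {x, y}) ∧
    mag (fun i j : ZMod n => j = i + 1) = 2 := by
  have : Fact (1 < n) := ⟨by omega⟩
  exact ⟨fun _ _ => isMAGSet_cycle_pair,
    mag_eq_two_of_isMAGSet_pair (a := 0) rfl zero_ne_one (isMAGSet_cycle_pair zero_ne_one)⟩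

end MAG
end

section
/- Let n ≥ 4 be even, and orient the cycle C_n so that it has exactly one source v_1 and exactly one sink v_{n/2+1}, which are at distance n/2 from each other along both paths of the cycle. Then the monitoring arc-geodetic number of this oriented cycle equals 4. -/
namespace MAG

variable {V : Type*}

/-!
Every arc brings its tail one step closer to the sink `m` (as measured by `sinkDist`), so all
walks between two given vertices have the same length: every walk is a geodesic, and a pair
monitors an arc exactly when every walk between the two vertices uses it.

The set `{0, 1, m, 2m - 1}` is monitoring: each arc is the only one leaving some vertex set that
contains the start but not the end of one of the pairs `(0, 1)`, `(1, m)`, `(0, 2m - 1)`,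
`(2m - 1, m)`. Conversely, the arc `(0, 1)` can only be monitored from the source `0` towards a
vertex strictly inside the upper path (the sink is also reachable through `2m - 1`), the arc
`(0, 2m - 1)` likewise towards the lower path, and the arc `(m - 1, m)` only towards the sink, so
every monitoring set has four distinct vertices.
-/

open Relation

section Walks

variable {A : V → V → Prop} {a b c x y z : V} {l : List V}

theorem DWalk.exists_eq_cons (h : DWalk A x y l) : ∃ t, l = x :: t := by
  cases h <;> exact ⟨_, rfl⟩

theorem DWalk.reflTransGen (h : DWalk A x y l) : ReflTransGen A x y := by
  induction h with
  | nil => exact .refl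
  | cons huv _ ih => exact .head huv ih

theorem DWalk.reflTransGen_of_mem (h : DWalk A x y l) (hz : z ∈ l) :
    ReflTransGen A x z ∧ ReflTransGen A z y := by
  induction h with
  | nil => rw [List.mem_singleton.mp hz]; exact ⟨.refl, .refl⟩
  | cons huv p ih =>
    rcases List.mem_cons.mp hz with rfl | hz
    · exact ⟨.refl, .head huv p.reflTransGen⟩
    · exact (ih hz).imp_left (.head huv)

theorem DWalk.exists_of_reflTransGen (h : ReflTransGen A x y) : ∃ l, DWalk A x y l := by
  induction h using ReflTransGen.head_induction_on with
  | refl => exact ⟨_, .nil _⟩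
  | head huv _ ih =>
    obtain ⟨l, hl⟩ := ih
    exact ⟨_, .cons huv hl⟩

theorem exists_isShortest (h : ReflTransGen A x y) : ∃ l, IsShortest A x y l := by
  classical
  obtain ⟨l₀, hl₀⟩ := DWalk.exists_of_reflTransGen h
  have hex : ∃ n, ∃ l, DWalk A x y l ∧ l.length = n := ⟨_, l₀, hl₀, rfl⟩
  obtain ⟨l, hl, hlen⟩ := Nat.find_spec hex
  exact ⟨l, hl, fun l' hl' => hlen ▸ Nat.find_min' hex ⟨l', hl', rfl⟩⟩

theorem ArcOn.cons (h : ArcOn a b l) (c : V) : ArcOn a b (c :: l) := by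
  obtain ⟨l₁, l₂, rfl⟩ := h
  exact ⟨c :: l₁, l₂, rfl⟩

theorem ArcOn.fst_mem (h : ArcOn a b l) : a ∈ l := by
  obtain ⟨l₁, l₂, rfl⟩ := h
  simp

theorem ArcOn.snd_mem (h : ArcOn a b l) : b ∈ l := by
  obtain ⟨l₁, l₂, rfl⟩ := h
  simp

theorem DWalk.arcOn_of_cut (p : V → Prop)
    (hcut : ∀ u v, A u v → p u → ¬ p v → u = a ∧ v = b) (h : DWalk A x y l) (hx : p x)
    (hy : ¬ p y) : ArcOn a b l := by
  induction h with
  | nil => exact absurd hx hy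
  | @cons u v w l huv hvw ih =>
    by_cases hv : p v
    · exact (ih hv hy).cons u
    · obtain ⟨rfl, rfl⟩ := hcut u v huv hx hv
      obtain ⟨t, rfl⟩ := hvw.exists_eq_cons
      exact ⟨[], t, rfl⟩

theorem monitors_of_cut (hxy : ReflTransGen A x y) (p : V → Prop)
    (hcut : ∀ u v, A u v → p u → ¬ p v → u = a ∧ v = b) (hx : p x) (hy : ¬ p y) :
    Monitors A x y a b :=
  .inl ⟨exists_isShortest hxy, fun _ hl => hl.1.arcOn_of_cut p hcut hx hy⟩

theorem eq_or_reflTransGen_of_forall_arcOn (hxc : A x c) (hcy : ReflTransGen A c y)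
    (hall : ∀ l, DWalk A x y l → ArcOn a b l) : b = x ∨ ReflTransGen A c b := by
  obtain ⟨l, hl⟩ := DWalk.exists_of_reflTransGen hcy
  rcases List.mem_cons.mp (hall _ (.cons hxc hl)).snd_mem with hb | hb
  · exact .inl hb
  · exact .inr (hl.reflTransGen_of_mem hb).1

section Potential

variable {f : V → ℕ}

theorem DWalk.length_add_of_potential (hf : ∀ u v, A u v → f v + 1 = f u) (h : DWalk A x y l) :
    l.length + f y = f x + 1 := by
  induction h with
  | nil => simp only [List.length_singleton]; omega
  | cons huv _ ih =>
    have := hf _ _ huv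
    simp only [List.length_cons]
    omega

theorem isShortest_iff_of_potential (hf : ∀ u v, A u v → f v + 1 = f u) :
    IsShortest A x y l ↔ DWalk A x y l := by
  refine ⟨And.left, fun h => ⟨h, fun l' h' => ?_⟩⟩
  have := h.length_add_of_potential hf
  have := h'.length_add_of_potential hf
  omega

theorem IsMAGSet.exists_forall_arcOn (hf : ∀ u v, A u v → f v + 1 = f u) {M : Set V}
    (hM : IsMAGSet A M) ⦃a b : V⦄ (hab : A a b) :
    ∃ s ∈ M, ∃ t ∈ M, ReflTransGen A s a ∧ ReflTransGen A b t ∧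
      ∀ l, DWalk A s t l → ArcOn a b l := by
  obtain ⟨x, hx, y, hy, -, hmon⟩ := hM a b hab
  have key : ∀ {s t}, (∃ l, IsShortest A s t l) →
      (∀ l, IsShortest A s t l → ArcOn a b l) →
      ReflTransGen A s a ∧ ReflTransGen A b t ∧ ∀ l, DWalk A s t l → ArcOn a b l := by
    rintro s t ⟨l, hl⟩ hall
    have hon := hall l hl
    exact ⟨(hl.1.reflTransGen_of_mem hon.fst_mem).1, (hl.1.reflTransGen_of_mem hon.snd_mem).2,
      fun l' hl' => hall l' ((isShortest_iff_of_potential hf).2 hl')⟩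
  rcases hmon with ⟨hex, hall⟩ | ⟨hex, hall⟩
  · exact ⟨x, hx, y, hy, key hex hall⟩
  · exact ⟨y, hy, x, hx, key hex hall⟩

end Potential

end Walks

theorem mag_eq_of_isMAGSet [Fintype V] {A : V → V → Prop} {k : ℕ} {M : Finset V}
    (hM : IsMAGSet A M) (hMk : M.card ≤ k)
    (hk : ∀ N : Finset V, IsMAGSet A N → k ≤ N.card) :
    mag A = k := by
  unfold mag
  refine le_antisymm ((Nat.sInf_le ?_).trans hMk) (le_csInf ⟨_, M, hM, rfl⟩ ?_)
  · exact ⟨M, hM, rfl⟩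
  · rintro _ ⟨N, hN, rfl⟩
    exact hk N hN

section Cycle

variable {m : ℕ}

def sourceSinkCycle (m : ℕ) (i j : Fin (2 * m)) : Prop :=
  (i.val < m ∧ j.val = i.val + 1) ∨
  (i.val = 0 ∧ j.val = 2 * m - 1) ∨
  (m + 1 ≤ i.val ∧ j.val = i.val - 1)

def sinkDist (m : ℕ) (i : Fin (2 * m)) : ℕ := if i.val ≤ m then m - i.val else i.val - m

theorem sinkDist_add_one_of_sourceSinkCycle {u v : Fin (2 * m)} (h : sourceSinkCycle m u v) :
    sinkDist m v + 1 = sinkDist m u := by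
  have := u.isLt
  unfold sourceSinkCycle at h
  unfold sinkDist
  split_ifs <;> omega

theorem reflTransGen_sourceSinkCycle_of_le {x y : Fin (2 * m)} (hxy : x.val ≤ y.val)
    (hy : y.val ≤ m) :
    ReflTransGen (sourceSinkCycle m) x y := by
  have := y.isLt
  let f : ℕ → Fin (2 * m) := fun n => ⟨min n m, by omega⟩
  have hstep : ∀ n, ReflTransGen (sourceSinkCycle m) (f n) (f (n + 1)) := by
    intro n
    by_cases hn : n < m
    · exact .single (.inl ⟨by simp [f]; omega, by simp [f]; omega⟩)
    · rw [show f (n + 1) = f n from Fin.ext (by simp [f]; omega)]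
  convert Nat.rel_of_forall_rel_succ_of_le (ReflTransGen (sourceSinkCycle m)) hstep hxy using 1 <;>
    exact Fin.ext (by simp [f]; omega)

theorem reflTransGen_sourceSinkCycle_of_ge {x y : Fin (2 * m)} (hxy : y.val ≤ x.val)
    (hy : m ≤ y.val) :
    ReflTransGen (sourceSinkCycle m) x y := by
  have := x.isLt
  let f : ℕ → Fin (2 * m) := fun n => ⟨max (2 * m - 1 - n) m, by omega⟩
  have hstep : ∀ n, ReflTransGen (sourceSinkCycle m) (f n) (f (n + 1)) := by
    intro n
    by_cases hn : m < 2 * m - 1 - n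
    · exact .single (.inr (.inr ⟨by simp [f]; omega, by simp [f]; omega⟩))
    · rw [show f (n + 1) = f n from Fin.ext (by simp [f]; omega)]
  convert Nat.rel_of_forall_rel_succ_of_le (ReflTransGen (sourceSinkCycle m)) hstep
    (show 2 * m - 1 - x.val ≤ 2 * m - 1 - y.val by omega) using 1 <;>
    exact Fin.ext (by simp [f]; omega)

theorem reflTransGen_sourceSinkCycle_iff {x y : Fin (2 * m)} :
    ReflTransGen (sourceSinkCycle m) x y ↔
      x.val = 0 ∨ x.val ≤ y.val ∧ y.val ≤ m ∨ m ≤ y.val ∧ y.val ≤ x.val := by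
  constructor
  · intro h
    induction h with
    | refl => omega
    | tail _ hcy ih =>
      have := x.isLt
      unfold sourceSinkCycle at hcy
      omega
  · rintro (hx | hxy | hxy)
    · by_cases hy : y.val ≤ m
      · exact reflTransGen_sourceSinkCycle_of_le (by omega) hy
      · have := y.isLt
        let last : Fin (2 * m) := ⟨2 * m - 1, by omega⟩
        exact .head (b := last) (.inr (.inl ⟨hx, rfl⟩))
          (reflTransGen_sourceSinkCycle_of_ge (by simp [last]; omega) (by omega))
    · exact reflTransGen_sourceSinkCycle_of_le hxy.1 hxy.2
    · exact reflTransGen_sourceSinkCycle_of_ge hxy.2 hxy.1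

theorem isMAGSet_sourceSinkCycle (hm : 2 ≤ m) :
    IsMAGSet (sourceSinkCycle m)
      ([⟨0, by omega⟩, ⟨1, by omega⟩, ⟨m, by omega⟩, ⟨2 * m - 1, by omega⟩] :
        List (Fin (2 * m))).toFinset := by
  intro a b hab
  rcases hab with ⟨ha, hb⟩ | ⟨ha, hb⟩ | ⟨ha, hb⟩
  · rcases Nat.eq_zero_or_pos a.val with ha0 | ha0
    · refine ⟨⟨0, by omega⟩, by simp, ⟨1, by omega⟩, by simp, by simp,
        monitors_of_cut (reflTransGen_sourceSinkCycle_iff.2 (by simp)) (fun z => z.val ≠ 1)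
          (fun u v huv hu hv => ?_) (by simp) (by simp)⟩
      unfold sourceSinkCycle at huv
      exact ⟨Fin.ext (by omega), Fin.ext (by omega)⟩
    · refine ⟨⟨1, by omega⟩, by simp, ⟨m, by omega⟩, by simp,
        by simp [Fin.ext_iff]; omega,
        monitors_of_cut (reflTransGen_sourceSinkCycle_iff.2 (by simp; omega))
          (fun z => 1 ≤ z.val ∧ z.val ≤ a.val) (fun u v huv hu hv => ?_)
          (by simp; omega) (by simp; omega)⟩
      unfold sourceSinkCycle at huv
      exact ⟨Fin.ext (by omega), Fin.ext (by omega)⟩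
  · refine ⟨⟨0, by omega⟩, by simp, ⟨2 * m - 1, by omega⟩, by simp,
      by simp [Fin.ext_iff]; omega,
      monitors_of_cut (reflTransGen_sourceSinkCycle_iff.2 (by simp)) (fun z => z.val ≠ 2 * m - 1)
        (fun u v huv hu hv => ?_) (by simp; omega) (by simp)⟩
    unfold sourceSinkCycle at huv
    exact ⟨Fin.ext (by omega), Fin.ext (by omega)⟩
  · have := a.isLt
    refine ⟨⟨2 * m - 1, by omega⟩, by simp, ⟨m, by omega⟩, by simp,
      by simp [Fin.ext_iff]; omega,
      monitors_of_cut (reflTransGen_sourceSinkCycle_iff.2 (by simp; omega))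
        (fun z => a.val ≤ z.val)
        (fun u v huv hu hv => ?_) (by simp; omega) (by simp; omega)⟩
    unfold sourceSinkCycle at huv
    exact ⟨Fin.ext (by omega), Fin.ext (by omega)⟩

theorem four_le_card_of_isMAGSet_sourceSinkCycle (hm : 2 ≤ m) {M : Finset (Fin (2 * m))}
    (hM : IsMAGSet (sourceSinkCycle m) M) : 4 ≤ M.card := by
  have hpair := hM.exists_forall_arcOn fun _ _ h => sinkDist_add_one_of_sourceSinkCycle h
  obtain ⟨s, hs, t₁, ht₁, hs₀, hbt₁, hall₁⟩ :=
    hpair (a := ⟨0, by omega⟩) (b := ⟨1, by omega⟩) (.inl ⟨by simp; omega, rfl⟩)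
  obtain ⟨s', -, t₂, ht₂, hs'₀, hbt₂, hall₂⟩ :=
    hpair (a := ⟨0, by omega⟩) (b := ⟨2 * m - 1, by omega⟩) (.inr (.inl ⟨rfl, rfl⟩))
  obtain ⟨-, -, t₃, ht₃, -, hbt₃, -⟩ :=
    hpair (a := ⟨m - 1, by omega⟩) (b := ⟨m, by omega⟩)
      (.inl ⟨by simp; omega, by simp; omega⟩)
  simp only [reflTransGen_sourceSinkCycle_iff] at hs₀ hbt₁ hs'₀ hbt₂ hbt₃
  -- the sink is also reached from the source along the other side of the cycle
  have ht₁m : t₁.val ≠ m := by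
    intro h
    have := eq_or_reflTransGen_of_forall_arcOn (c := ⟨2 * m - 1, by omega⟩)
      (.inr (.inl ⟨by omega, rfl⟩)) (reflTransGen_sourceSinkCycle_iff.2 (by simp; omega))
      hall₁
    simp only [reflTransGen_sourceSinkCycle_iff, Fin.ext_iff] at this
    omega
  have ht₂m : t₂.val ≠ m := by
    intro h
    have := eq_or_reflTransGen_of_forall_arcOn (c := ⟨1, by omega⟩)
      (.inl ⟨by omega, by simp; omega⟩) (reflTransGen_sourceSinkCycle_iff.2 (by simp; omega))
      hall₂
    simp only [reflTransGen_sourceSinkCycle_iff, Fin.ext_iff] at this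
    omega
  have hnodup : [s, t₁, t₃, t₂].Nodup := by
    simp only [List.nodup_cons, List.mem_cons, List.not_mem_nil, List.nodup_nil, Fin.ext_iff,
      or_false, not_false_eq_true, and_true]
    refine ⟨?_, ?_, ?_⟩ <;> omega
  calc 4 = [s, t₁, t₃, t₂].toFinset.card := (List.toFinset_card_of_nodup hnodup).symm
    _ ≤ M.card := Finset.card_le_card (by simp_all [Finset.insert_subset_iff])

end Cycle

/-- Here `n = 2 * m` and the vertices are numbered from `0`: the source is `0`, the sink `m`. -/
theorem evenCycle_one_source_one_sink_mag_eq_four (m : ℕ) (hm : 2 ≤ m) :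
    mag (fun i j : Fin (2 * m) =>
      (i.val < m ∧ j.val = i.val + 1) ∨
      (i.val = 0 ∧ j.val = 2 * m - 1) ∨
      (m + 1 ≤ i.val ∧ j.val = i.val - 1)) = 4 :=
  show mag (sourceSinkCycle m) = 4 from
    mag_eq_of_isMAGSet (isMAGSet_sourceSinkCycle hm) (List.toFinset_card_le _)
      fun _ => four_le_card_of_isMAGSet_sourceSinkCycle hm

end MAG
end

section
/- Let an orientation of a cycle have at least two sources and at least two sinks. Then its minimum monitoring arc-geodetic set is exactly the set of its sources and sinks, so its monitoring arc-geodetic number equals the number of sources and sinks. -/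
namespace MAG

variable {V : Type*}

/-!
Every directed walk in an oriented cycle keeps going around in one direction. An arc leaving a
source (entering a sink) can therefore only be the first (last) arc of a walk, so every MAG-set
contains all sources and sinks. Conversely, an arc `u → u + d` extends to a maximal run
`s → s + d → ⋯ → t` from a source to a sink. Any other walk from `s` to `t` goes around the
other side of the cycle, and the two runs together cover the whole cycle with `s` as their only
source; a second source rules this out. Hence the run is the only walk from `s` to `t` and
`s, t` monitor the arc.

The cycle is taken to be the Cayley graph of an additive group generated by one element `d`
(`ZMod n` with `d = 1` gives `C_n`); replacing `d` by `-d` reflects it, so only arcs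
`u → u + d` need an argument.
-/

section Walks

variable {V : Type*} {A : V → V → Prop} {x y a b : V} {l : List V}

theorem DWalk.head?_eq (h : DWalk A x y l) : l.head? = some x := by
  cases h <;> rfl

theorem DWalk.getLast?_eq (h : DWalk A x y l) : l.getLast? = some y := by
  induction h with
  | nil => rfl
  | cons _ p ih => rw [List.getLast?_cons, ih]; rfl

theorem DWalk.isChain (h : DWalk A x y l) : l.IsChain A := by
  induction h with
  | nil => exact List.isChain_singleton _
  | cons huv p ih => exact List.isChain_cons.2 ⟨by simpa [p.head?_eq] using huv, ih⟩

theorem DWalk.eq_of_arcOn_of_isSource (h : DWalk A x y l) (hab : ArcOn a b l)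
    (ha : IsSource A a) : x = a := by
  obtain ⟨l₁, l₂, rfl⟩ := hab
  rcases l₁.eq_nil_or_concat with rfl | ⟨l₁, c, rfl⟩
  · simpa using h.head?_eq.symm
  · have := h.isChain
    rw [show l₁.concat c ++ a :: b :: l₂ = l₁ ++ c :: a :: b :: l₂ by simp,
      List.isChain_append_cons_cons] at this
    exact absurd this.2.1 (ha c)

theorem DWalk.eq_of_arcOn_of_isSink (h : DWalk A x y l) (hab : ArcOn a b l)
    (hb : IsSink A b) : y = b := by
  obtain ⟨l₁, l₂, rfl⟩ := hab
  rcases l₂ with _ | ⟨c, l₂⟩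
  · simpa using h.getLast?_eq.symm
  · have := h.isChain
    rw [show l₁ ++ a :: b :: c :: l₂ = (l₁ ++ [a]) ++ b :: c :: l₂ by simp,
      List.isChain_append_cons_cons] at this
    exact absurd this.2.1 (hb c)

theorem mem_of_isMAGSet_of_isSource {M : Set V} (hM : IsMAGSet A M) (ha : IsSource A a)
    (hab : A a b) : a ∈ M := by
  obtain ⟨x, hx, y, hy, -, ⟨⟨l, hl⟩, hall⟩ | ⟨⟨l, hl⟩, hall⟩⟩ := hM a b hab
  · exact hl.1.eq_of_arcOn_of_isSource (hall l hl) ha ▸ hx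
  · exact hl.1.eq_of_arcOn_of_isSource (hall l hl) ha ▸ hy

theorem mem_of_isMAGSet_of_isSink {M : Set V} (hM : IsMAGSet A M) (hb : IsSink A b)
    (hab : A a b) : b ∈ M := by
  obtain ⟨x, hx, y, hy, -, ⟨⟨l, hl⟩, hall⟩ | ⟨⟨l, hl⟩, hall⟩⟩ := hM a b hab
  · exact hl.1.eq_of_arcOn_of_isSink (hall l hl) hb ▸ hy
  · exact hl.1.eq_of_arcOn_of_isSink (hall l hl) hb ▸ hx

theorem monitors_of_forall_dWalk_eq (hl : DWalk A x y l)
    (huniq : ∀ l', DWalk A x y l' → l' = l) (hab : ArcOn a b l) : Monitors A x y a b :=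
  .inl ⟨⟨l, hl, fun l' hl' => by rw [huniq l' hl']⟩, fun l' hl' => huniq l' hl'.1 ▸ hab⟩

theorem mag_eq_ncard [Fintype V] {S : Set V} (hS : IsMAGSet A S)
    (hmin : ∀ M, IsMAGSet A M → S ⊆ M) : mag A = S.ncard := by
  classical
  have hmem : S.ncard ∈ {n | ∃ M : Finset V, IsMAGSet A (M : Set V) ∧ M.card = n} :=
    ⟨S.toFinset, by simpa using hS, (Set.ncard_eq_toFinset_card' S).symm⟩
  refine le_antisymm (Nat.sInf_le hmem) (le_csInf ⟨_, hmem⟩ ?_)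
  rintro _ ⟨M, hM, rfl⟩
  simpa using Set.ncard_le_ncard (hmin _ hM)

end Walks

section Runs

variable {G : Type*} [AddMonoid G] {A : G → G → Prop} {d x : G} {j k : ℕ}

def IsRun (A : G → G → Prop) (d x : G) (k : ℕ) : Prop :=
  ∀ i < k, A (x + i • d) (x + i • d + d)

theorem isRun_succ : IsRun A d x (k + 1) ↔ A x (x + d) ∧ IsRun A d (x + d) k := by
  simp only [IsRun, Nat.forall_lt_succ_left, zero_nsmul, add_zero, zero_add, succ_nsmul',
    add_assoc]

theorem IsRun.dWalk (h : IsRun A d x k) :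
    DWalk A x (x + k • d) (List.iterate (· + d) x (k + 1)) := by
  induction k generalizing x with
  | zero => simpa using DWalk.nil x
  | succ k ih =>
    obtain ⟨hx, h⟩ := isRun_succ.1 h
    simpa [succ_nsmul', add_assoc] using DWalk.cons hx (ih h)

theorem arcOn_iterate (hjk : j < k) :
    ArcOn (x + j • d) (x + j • d + d) (List.iterate (· + d) x (k + 1)) := by
  induction j generalizing x k with
  | zero =>
    obtain ⟨k, rfl⟩ : ∃ k', k = k' + 1 := ⟨k - 1, by omega⟩
    exact ⟨[], List.iterate (· + d) (x + d + d) k, by simp [List.iterate]⟩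
  | succ j ih =>
    obtain ⟨k, rfl⟩ : ∃ k', k = k' + 1 := ⟨k - 1, by omega⟩
    obtain ⟨l₁, l₂, hl⟩ := ih (x := x + d) (k := k) (by omega)
    refine ⟨x :: l₁, l₂, ?_⟩
    rw [succ_nsmul', ← add_assoc]
    exact congrArg (x :: ·) hl

theorem IsRun.not_isSource (h : IsRun A d x k) (hj : 0 < j) (hjk : j ≤ k) :
    ¬IsSource A (x + j • d) := by
  obtain ⟨i, rfl⟩ : ∃ i, j = i + 1 := ⟨j - 1, by omega⟩
  intro hs
  apply hs _
  rw [succ_nsmul, ← add_assoc]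
  exact h i (by omega)

end Runs

section Cayley

open SimpleGraph

variable {G : Type*} [AddCommGroup G] {A : G → G → Prop} {d s u w x y : G} {k : ℕ}
  {l : List G}

theorem IsOrientation.neg (hA : IsOrientation (addCayley {d}) A) :
    IsOrientation (addCayley {-d}) A := by
  rwa [← Set.neg_singleton, addCayley_neg]

theorem IsOrientation.eq_add_or_eq_add (hA : IsOrientation (addCayley {d}) A) (h : A x y) :
    y = x + d ∨ x = y + d := by
  have := (hA.adj_iff x y).2 (.inl h)
  simp only [addCayley_adj', Set.mem_singleton_iff, exists_eq_left] at this
  exact this.2.imp_left Eq.symm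

theorem IsOrientation.adj_or_adj (hA : IsOrientation (addCayley {d}) A) (hd : d ≠ 0) (x : G) :
    A x (x + d) ∨ A (x + d) x :=
  (hA.adj_iff _ _).1 (by simp [addCayley_adj', hd])

theorem IsOrientation.isSource_add (hA : IsOrientation (addCayley {d}) A)
    (hin : ¬A w (w + d)) (hout : A (w + d) (w + d + d)) : IsSource A (w + d) := by
  intro v hv
  rcases hA.eq_add_or_eq_add hv with h | rfl
  · exact hin (add_right_cancel h ▸ hv)
  · exact hA.asymm _ _ hv hout

theorem IsOrientation.isSink_add (hA : IsOrientation (addCayley {d}) A)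
    (hin : A w (w + d)) (hout : ¬A (w + d) (w + d + d)) : IsSink A (w + d) := by
  intro v hv
  rcases hA.eq_add_or_eq_add hv with rfl | h
  · exact hout hv
  · exact hA.asymm _ _ hin (add_right_cancel h ▸ hv)

theorem IsOrientation.dWalk_cases (hA : IsOrientation (addCayley {d}) A) (h : DWalk A x y l) :
    ∃ e k, (e = d ∨ e = -d) ∧ IsRun A e x k ∧ y = x + k • e ∧
      l = List.iterate (· + e) x (k + 1) := by
  induction h with
  | nil v => exact ⟨d, 0, .inl rfl, fun i hi => absurd hi i.not_lt_zero, by simp, rfl⟩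
  | @cons u v w l huv p ih =>
    obtain ⟨e, k, he, hrun, rfl, rfl⟩ := ih
    obtain ⟨e₀, he₀, rfl⟩ : ∃ e₀, (e₀ = d ∨ e₀ = -d) ∧ v = u + e₀ := by
      rcases hA.eq_add_or_eq_add huv with h | rfl
      exacts [⟨d, .inl rfl, h⟩, ⟨-d, .inr rfl, by abel⟩]
    cases k with
    | zero => exact ⟨e₀, 1, he₀, isRun_succ.2 ⟨huv, fun i hi => absurd hi i.not_lt_zero⟩,
        by simp, rfl⟩
    | succ k =>
      obtain rfl : e = e₀ := by
        by_contra hne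
        have hback : u + e₀ + e = u := by
          rcases he with rfl | rfl <;> rcases he₀ with rfl | rfl <;>
            first | exact absurd rfl hne | abel
        have hvu := (isRun_succ.1 hrun).1
        rw [hback] at hvu
        exact hA.asymm _ _ huv hvu
      exact ⟨e, k + 2, he, isRun_succ.2 ⟨huv, hrun⟩, by rw [add_assoc, ← succ_nsmul'], rfl⟩

theorem IsRun.eq_of_isSource_of_isRun_neg (hgen : Function.Surjective fun j : ℕ => j • d)
    {s' : G} {k' : ℕ} (h₁ : IsRun A d s k) (h₂ : IsRun A (-d) s k') (hk : 0 < k)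
    (hmeet : s + k' • -d = s + k • d) (hs' : IsSource A s') : s' = s := by
  have hcycle : (k + k') • d = 0 := by
    rw [smul_neg, add_right_inj] at hmeet
    rw [add_nsmul, ← hmeet, neg_add_cancel]
  obtain ⟨j₀, hj₀⟩ := hgen (s' - s)
  set j := j₀ % (k + k')
  have hs'j : s' = s + j • d := by
    rw [← nsmul_eq_mod_nsmul j₀ hcycle, show j₀ • d = s' - s from hj₀, add_sub_cancel]
  have hjp : j < k + k' := Nat.mod_lt _ (by omega)
  rcases Nat.eq_zero_or_pos j with hj | hj
  · simp [hs'j, hj]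
  by_cases hjk : j ≤ k
  · exact absurd (hs'j ▸ hs') (h₁.not_isSource hj hjk)
  · have hback : s' = s + (k + k' - j) • -d := by
      have : j • d + (k + k' - j) • d = 0 := by
        rw [← add_nsmul, Nat.add_sub_cancel' hjp.le, hcycle]
      rw [hs'j, smul_neg, eq_neg_of_add_eq_zero_left this]
    exact absurd (hback ▸ hs') (h₂.not_isSource (by omega) (by omega))

theorem IsOrientation.dWalk_eq_iterate (hA : IsOrientation (addCayley {d}) A)
    (hgen : Function.Surjective fun j : ℕ => j • d) (hother : ∃ s', s' ≠ s ∧ IsSource A s')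
    (hrun : IsRun A d s k) (hk : 0 < k) (ht : IsSink A (s + k • d))
    (h : DWalk A s (s + k • d) l) : l = List.iterate (· + d) s (k + 1) := by
  obtain ⟨e, k', he | rfl, hrun', hend, rfl⟩ := hA.dWalk_cases h
  · subst he
    obtain rfl : k' = k := by
      rcases lt_trichotomy k' k with hlt | heq | hgt
      · exact absurd (hend ▸ hrun k' hlt) (ht _)
      · exact heq
      · exact absurd (hrun' k hgt) (ht _)
    rfl
  · obtain ⟨s', hne, hs'⟩ := hother
    exact absurd (hrun.eq_of_isSource_of_isRun_neg hgen hrun' hk hend.symm hs') hne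

theorem IsOrientation.exists_isSource_isRun (hA : IsOrientation (addCayley {d}) A)
    (hgen : Function.Surjective fun j : ℕ => j • d) (hw : ¬A w (w + d)) (hu : A u (u + d)) :
    ∃ s p, IsSource A s ∧ IsRun A d s (p + 1) ∧ s + p • d = u := by
  classical
  obtain ⟨j, hj⟩ := hgen (u - w)
  have hu' : u = w + j • d := by rw [show j • d = u - w from hj, add_sub_cancel]
  let P : ℕ → Prop := fun i => ¬A (w + i • d) (w + i • d + d)
  have hP : P (Nat.findGreatest P j) :=
    Nat.findGreatest_spec (Nat.zero_le j) (by simpa [P] using hw)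
  obtain ⟨q, hq, hqj, harc⟩ : ∃ q, P q ∧ q < j ∧
      ∀ i, q < i → i ≤ j → A (w + i • d) (w + i • d + d) := by
    refine ⟨_, hP, (Nat.findGreatest_le j).lt_of_ne fun h => ?_,
      fun i h₁ h₂ => not_not.1 (Nat.findGreatest_is_greatest h₁ h₂)⟩
    rw [h] at hP
    exact hP (hu' ▸ hu)
  have hshift (i : ℕ) : w + (q + 1 + i) • d = w + q • d + d + i • d := by
    simp only [add_nsmul, one_nsmul]; abel
  obtain ⟨r, rfl⟩ : ∃ r, j = q + 1 + r := ⟨j - q - 1, by omega⟩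
  refine ⟨w + q • d + d, r, hA.isSource_add hq ?_, fun i hi => ?_, ?_⟩
  · have h₀ := harc (q + 1 + 0) (by omega) (by omega)
    rwa [hshift, zero_nsmul, add_zero] at h₀
  · simpa [hshift] using harc (q + 1 + i) (by omega) (by omega)
  · rw [hu', hshift]

theorem IsOrientation.exists_segment (hA : IsOrientation (addCayley {d}) A)
    (hgen : Function.Surjective fun j : ℕ => j • d) (hw : ¬A w (w + d)) (hu : A u (u + d)) :
    ∃ (s : G) (k : ℕ), ∃ p < k,
      IsSource A s ∧ IsRun A d s k ∧ IsSink A (s + k • d) ∧ s + p • d = u := by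
  classical
  obtain ⟨s, p, hs, hrun, rfl⟩ := hA.exists_isSource_isRun hgen hw hu
  have hex : ∃ k : ℕ, ¬A (s + k • d) (s + k • d + d) := by
    obtain ⟨j, hj⟩ := hgen (w - s)
    exact ⟨j, by rwa [show j • d = w - s from hj, add_sub_cancel]⟩
  have hpk : p < Nat.find hex := by
    by_contra! h
    exact Nat.find_spec hex (hrun _ (by omega))
  obtain ⟨k, hk⟩ : ∃ k, Nat.find hex = k + 1 := ⟨Nat.find hex - 1, by omega⟩
  have hend := Nat.find_spec hex
  rw [hk, succ_nsmul, ← add_assoc] at hend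
  refine ⟨s, Nat.find hex, p, hpk, hs, fun i hi => not_not.1 (Nat.find_min hex hi), ?_, rfl⟩
  rw [hk, succ_nsmul, ← add_assoc]
  exact hA.isSink_add (not_not.1 (Nat.find_min hex (by omega))) hend

theorem IsOrientation.exists_monitors (hA : IsOrientation (addCayley {d}) A)
    (hgen : Function.Surjective fun j : ℕ => j • d)
    (hsources : ∃ s₁ s₂ : G, s₁ ≠ s₂ ∧ IsSource A s₁ ∧ IsSource A s₂) (hu : A u (u + d)) :
    ∃ x ∈ {v | IsSource A v ∨ IsSink A v}, ∃ y ∈ {v | IsSource A v ∨ IsSink A v},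
      x ≠ y ∧ Monitors A x y u (u + d) := by
  obtain ⟨s₁, s₂, hne, hs₁, hs₂⟩ := hsources
  have hw : ¬A (s₁ - d) (s₁ - d + d) := by rw [sub_add_cancel]; exact hs₁ _
  obtain ⟨s, k, p, hpk, hs, hrun, ht, rfl⟩ := hA.exists_segment hgen hw hu
  have hother : ∃ s', s' ≠ s ∧ IsSource A s' := by
    by_cases h : s₁ = s
    exacts [⟨s₂, h ▸ hne.symm, hs₂⟩, ⟨s₁, h, hs₁⟩]
  have hst : s ≠ s + k • d := fun h => ht _ (by simpa [← h] using hrun 0 (by omega))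
  exact ⟨s, .inl hs, _, .inr ht, hst, monitors_of_forall_dWalk_eq hrun.dWalk
    (fun l hl => hA.dWalk_eq_iterate hgen hother hrun (by omega) ht hl) (arcOn_iterate hpk)⟩

theorem IsOrientation.isMAGSet_sources_sinks (hA : IsOrientation (addCayley {d}) A)
    (hgen : Function.Surjective fun j : ℕ => j • d)
    (hsources : ∃ s₁ s₂ : G, s₁ ≠ s₂ ∧ IsSource A s₁ ∧ IsSource A s₂) :
    IsMAGSet A {v | IsSource A v ∨ IsSink A v} := by
  intro a b hab
  rcases hA.eq_add_or_eq_add hab with rfl | rfl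
  · exact hA.exists_monitors hgen hsources hab
  · have hgen' : Function.Surjective fun j : ℕ => j • -d := fun v =>
      (hgen (-v)).imp fun j hj => by simp only [smul_neg, hj, neg_neg]
    simpa using hA.neg.exists_monitors hgen' hsources (u := b + d) (by simpa using hab)

theorem IsOrientation.sources_sinks_subset (hA : IsOrientation (addCayley {d}) A) (hd : d ≠ 0)
    {M : Set G} (hM : IsMAGSet A M) : {v | IsSource A v ∨ IsSink A v} ⊆ M := by
  rintro v (hv | hv)
  · exact (hA.adj_or_adj hd v).elim (mem_of_isMAGSet_of_isSource hM hv) (absurd · (hv _))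
  · exact (hA.adj_or_adj hd v).elim (absurd · (hv _)) (mem_of_isMAGSet_of_isSink hM hv)

theorem isOrientation_addCayley_of_bool (hd : d ≠ 0) (hd₂ : d + d ≠ 0) (f : G → Bool)
    (hA : ∀ i j, A i j ↔ ((j = i + d ∧ f i = true) ∨ (i = j + d ∧ f j = false))) :
    IsOrientation (addCayley {d}) A where
  adj_iff u v := by
    simp only [addCayley_adj', Set.mem_singleton_iff, exists_eq_left, hA]
    constructor
    · rintro ⟨-, rfl | rfl⟩
      · cases f u <;> simp
      · cases f v <;> simp
    · rintro ((⟨rfl, -⟩ | ⟨rfl, -⟩) | (⟨rfl, -⟩ | ⟨rfl, -⟩)) <;> simp [hd]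
  asymm u v := by
    simp only [hA]
    rintro (⟨rfl, h⟩ | ⟨rfl, h⟩)
    · rintro (⟨h', -⟩ | ⟨-, h'⟩)
      · exact hd₂ (by rwa [add_assoc, left_eq_add] at h')
      · simp [h] at h'
    · rintro (⟨-, h'⟩ | ⟨h', -⟩)
      · simp [h] at h'
      · exact hd₂ (by rwa [add_assoc, left_eq_add] at h')

end Cayley

/-- The orientation of the cycle on `ZMod n` is encoded by `f : ZMod n → Bool`: `f i = true` iff
the edge `{i, i+1}` is oriented from `i` to `i+1`. -/
theorem cycle_many_sources_sinks_mag_general (n : ℕ) [NeZero n] (hn : 3 ≤ n)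
    (f : ZMod n → Bool)
    (A : ZMod n → ZMod n → Prop)
    (hA : ∀ i j : ZMod n, A i j ↔ ((j = i + 1 ∧ f i = true) ∨
      (i = j + 1 ∧ f j = false)))
    (hsources : ∃ s₁ s₂ : ZMod n, s₁ ≠ s₂ ∧ IsSource A s₁ ∧ IsSource A s₂) :
    IsMAGSet A {v : ZMod n | IsSource A v ∨ IsSink A v} ∧
    (∀ M : Set (ZMod n), IsMAGSet A M →
      {v : ZMod n | IsSource A v ∨ IsSink A v} ⊆ M) ∧
    mag A = {v : ZMod n | IsSource A v ∨ IsSink A v}.ncard := by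
  have hcast (m : ℕ) (h0 : 0 < m) (hm : m < n) : (m : ZMod n) ≠ 0 := fun h =>
    absurd (Nat.le_of_dvd h0 ((ZMod.natCast_eq_zero_iff m n).1 h)) (by omega)
  have h1 : (1 : ZMod n) ≠ 0 := by exact_mod_cast hcast 1 one_pos (by omega)
  have h2 : (1 + 1 : ZMod n) ≠ 0 := by exact_mod_cast hcast 2 two_pos (by omega)
  have hor := isOrientation_addCayley_of_bool h1 h2 f hA
  have hgen : Function.Surjective fun j : ℕ => j • (1 : ZMod n) := fun v => ⟨v.val, by simp⟩
  have hS := hor.isMAGSet_sources_sinks hgen hsources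
  have hmin (M : Set (ZMod n)) (hM : IsMAGSet A M) := hor.sources_sinks_subset h1 hM
  exact ⟨hS, hmin, mag_eq_ncard hS hmin⟩

/-- an orientation of a cycle with at least two sources and at
least two sinks has the set of sources and sinks as its unique minimum
MAG-set, and its `mag` equals the number of sources and sinks.  The
orientation of the cycle on `ZMod n` is encoded by `f : ZMod n → Bool`
(`f i = true` iff the edge `{i, i+1}` is oriented from `i` to `i+1`). -/
theorem cycle_many_sources_sinks_mag (n : ℕ) [NeZero n] (hn : 3 ≤ n)
    (f : ZMod n → Bool)
    (A : ZMod n → ZMod n → Prop)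
    (hA : ∀ i j : ZMod n, A i j ↔ ((j = i + 1 ∧ f i = true) ∨
      (i = j + 1 ∧ f j = false)))
    (hsources : ∃ s₁ s₂ : ZMod n, s₁ ≠ s₂ ∧ IsSource A s₁ ∧ IsSource A s₂)
    (hsinks : ∃ t₁ t₂ : ZMod n, t₁ ≠ t₂ ∧ IsSink A t₁ ∧ IsSink A t₂) :
    IsMAGSet A {v : ZMod n | IsSource A v ∨ IsSink A v} ∧
    (∀ M : Set (ZMod n), IsMAGSet A M →
      {v : ZMod n | IsSource A v ∨ IsSink A v} ⊆ M) ∧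
    mag A = {v : ZMod n | IsSource A v ∨ IsSink A v}.ncard :=
  cycle_many_sources_sinks_mag_general n hn f A hA hsources

end MAG
end
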